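/- arXiv:0912.1070 — 9 statements merged into one kernel-verified Lean document; each statement's English description precedes it below -/
import Mathlib

section
/- Let A be an associative unital ℂ-algebra containing a family of parabosons B_k^± indexed by k ∈ Fin m. Then for all i, j, k, l ∈ Fin m one has [{B_i^+, B_j^−}, {B_k^+, B_l^−}] = 2·δ_{jk}·{B_i^+, B_l^−} − 2·δ_{il}·{B_k^+, B_j^−} in A. -/
open scoped BigOperators

noncomputable section

/-- The ringComm `[x, y] = x * y - y * x`. -/
def ringComm {A : Type*} [Ring A] (x y : A) : A := x * y - y * x

/-- The ringAnticomm `{x, y} = x * y + y * x`. -/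
def ringAnticomm {A : Type*} [Ring A] (x y : A) : A := x * y + y * x

/-- A family of parabosons: `B k 1 = B_k^+`, `B k (-1) = B_k^-`, satisfying the
paraboson trilinear relations. -/
def IsParabosonFamily {A : Type*} [Ring A] [Algebra ℂ A] {ι : Type*} [DecidableEq ι]
    (B : ι → ℂ → A) : Prop :=
  ∀ (i j k : ι), ∀ ξ ∈ ({1, -1} : Set ℂ), ∀ η ∈ ({1, -1} : Set ℂ),
    ∀ ε ∈ ({1, -1} : Set ℂ),
      ringComm (ringAnticomm (B i ξ) (B j η)) (B k ε) =
        ((ε - η) * (if j = k then (1 : ℂ) else 0)) • B i ξ +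
          ((ε - ξ) * (if i = k then (1 : ℂ) else 0)) • B j η

/-- Commutator of two paraboson "number-like" operators `{B_i^+, B_j^-}`. -/
theorem paraboson_even_part_commutator {A : Type*} [Ring A] [Algebra ℂ A] {m : ℕ}
    (B : Fin m → ℂ → A) (hB : IsParabosonFamily B) (i j k l : Fin m) :
    ringComm (ringAnticomm (B i 1) (B j (-1))) (ringAnticomm (B k 1) (B l (-1))) =
      ((2 : ℂ) * (if j = k then (1 : ℂ) else 0)) • ringAnticomm (B i 1) (B l (-1)) -
        ((2 : ℂ) * (if i = l then (1 : ℂ) else 0)) • ringAnticomm (B k 1) (B j (-1)) := by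
  have h1 := hB i j k 1 (by simp) (-1) (by simp) 1 (by simp)
  have h2 := hB i j l 1 (by simp) (-1) (by simp) (-1) (by simp)
  simp only [ringComm, ringAnticomm] at h1 h2 ⊢
  norm_num at h1 h2
  set X := B i 1 * B j (-1) + B j (-1) * B i 1 with hX
  set Y := B k 1 with hY
  set Z := B l (-1) with hZ
  have key : X * (Y * Z + Z * Y) - (Y * Z + Z * Y) * X =
      (X * Y - Y * X) * Z + Y * (X * Z - Z * X) + (X * Z - Z * X) * Y +
        Z * (X * Y - Y * X) := by noncomm_ring
  rw [key, h1, h2]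
  simp only [smul_mul_assoc, mul_smul_comm, smul_add, sub_eq_add_neg, neg_smul, smul_neg]
  by_cases hjk : j = k <;> by_cases hil : i = l <;>
    simp [hjk, hil, mul_comm] <;> abel

end
end

section
/- Let A be an associative unital ℂ-algebra containing a family of parafermions F_α^± indexed by α ∈ Fin n. Then for all α, β, γ, δ ∈ Fin n one has [[F_α^+, F_β^−], [F_γ^+, F_δ^−]] = 2·δ_{βγ}·[F_α^+, F_δ^−] − 2·δ_{αδ}·[F_γ^+, F_β^−] in A. -/
open scoped BigOperators

noncomputable section

/-- A family of parafermions: `F α 1 = F_α^+`, `F α (-1) = F_α^-`, satisfying the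
parafermion trilinear relations. -/
def IsParafermionFamily {A : Type*} [Ring A] [Algebra ℂ A] {κ : Type*} [DecidableEq κ]
    (F : κ → ℂ → A) : Prop :=
  ∀ (i j k : κ), ∀ ξ ∈ ({1, -1} : Set ℂ), ∀ η ∈ ({1, -1} : Set ℂ),
    ∀ ε ∈ ({1, -1} : Set ℂ),
      ringComm (ringComm (F i ξ) (F j η)) (F k ε) =
        ((1 / 2 : ℂ) * (ε - η) ^ 2 * (if j = k then (1 : ℂ) else 0)) • F i ξ -
          ((1 / 2 : ℂ) * (ε - ξ) ^ 2 * (if i = k then (1 : ℂ) else 0)) • F j η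

lemma ringComm_smul_left {A : Type*} [Ring A] [Algebra ℂ A] (c : ℂ) (x y : A) :
    ringComm (c • x) y = c • ringComm x y := by
  simp [ringComm, smul_mul_assoc, mul_smul_comm, smul_sub]

lemma ringComm_sub_left {A : Type*} [Ring A] (x y z : A) :
    ringComm (x - y) z = ringComm x z - ringComm y z := by
  unfold ringComm; noncomm_ring

lemma ringComm_expand {A : Type*} [Ring A] (a u v : A) :
    ringComm a (ringComm u v) = ringComm (ringComm a u) v - ringComm (ringComm a v) u := by
  unfold ringComm; noncomm_ring

lemma ringComm_skew {A : Type*} [Ring A] (x y : A) :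
    ringComm x y = -ringComm y x := by
  unfold ringComm; rw [neg_sub]

/-- Commutator of two parafermion "number-like" operators `[F_α^+, F_β^-]`. -/
theorem parafermion_even_part_commutator {A : Type*} [Ring A] [Algebra ℂ A] {n : ℕ}
    (F : Fin n → ℂ → A) (hF : IsParafermionFamily F) (α β γ δ : Fin n) :
    ringComm (ringComm (F α 1) (F β (-1))) (ringComm (F γ 1) (F δ (-1))) =
      ((2 : ℂ) * (if β = γ then (1 : ℂ) else 0)) • ringComm (F α 1) (F δ (-1)) -
        ((2 : ℂ) * (if α = δ then (1 : ℂ) else 0)) • ringComm (F γ 1) (F β (-1)) := by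
  have h1 := hF α β γ 1 (by simp) (-1) (by simp) 1 (by simp)
  have h2 := hF α β δ 1 (by simp) (-1) (by simp) (-1) (by simp)
  rw [ringComm_expand, h1, h2]
  rw [ringComm_sub_left, ringComm_sub_left, ringComm_smul_left, ringComm_smul_left,
    ringComm_smul_left, ringComm_smul_left,
    ringComm_skew (F β (-1)) (F γ 1)]
  norm_num

end
end

section
/- Let A be an associative unital ℂ-algebra containing parabosons B_k^± (k ∈ Fin m) and parafermions F_α^± (α ∈ Fin n) satisfying the relative parabose (Greenberg–Messiah) mixed relations. Then for all k, l, p ∈ Fin m and α ∈ Fin n one has [{B_k^+, B_l^−}, {B_p^+, F_α^−}] = 2·δ_{lp}·{B_k^+, F_α^−} in A. -/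
open scoped BigOperators

noncomputable section

/-- The relative parabose (Greenberg–Messiah) mixed trilinear relations between
a family of parabosons `B` and a family of parafermions `F`. -/
def RelParaboseMixed {A : Type*} [Ring A] [Algebra ℂ A] {ι κ : Type*} [DecidableEq ι] [DecidableEq κ]
    (B : ι → ℂ → A) (F : κ → ℂ → A) : Prop :=
  ∀ (i j : ι) (α β : κ), ∀ ξ ∈ ({1, -1} : Set ℂ), ∀ η ∈ ({1, -1} : Set ℂ),
    ∀ ε ∈ ({1, -1} : Set ℂ),
      ringComm (ringAnticomm (B i ξ) (B j η)) (F α ε) = 0 ∧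
      ringComm (ringComm (F α ξ) (F β η)) (B i ε) = 0 ∧
      ringComm (ringAnticomm (B i ξ) (F α η)) (B j ε) =
        ((ε - ξ) * (if i = j then (1 : ℂ) else 0)) • F α η ∧
      ringAnticomm (ringAnticomm (B i ξ) (F α η)) (F β ε) =
        ((1 / 2 : ℂ) * (ε - η) ^ 2 * (if α = β then (1 : ℂ) else 0)) • B i ξ


lemma comm_anticomm_leibniz {A : Type*} [Ring A] (x p q : A) :
    ringComm x (ringAnticomm p q) =
      ringAnticomm (ringComm x p) q + ringAnticomm p (ringComm x q) := by
  simp only [ringComm, ringAnticomm]; noncomm_ring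

theorem comm_BB_BF
 {A : Type*} [Ring A] [Algebra ℂ A] {m n : ℕ}
    (B : Fin m → ℂ → A) (F : Fin n → ℂ → A)
    (hB : IsParabosonFamily B) (hF : IsParafermionFamily F)
    (hBF : RelParaboseMixed B F)
    (k l p : Fin m) (α : Fin n) :
    ringComm (ringAnticomm (B k 1) (B l (-1))) (ringAnticomm (B p 1) (F α (-1))) =
      ((2 : ℂ) * (if l = p then (1 : ℂ) else 0)) • ringAnticomm (B k 1) (F α (-1)) := by
  have h1 : (1 : ℂ) ∈ ({1, -1} : Set ℂ) := Or.inl rfl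
  have h2 : (-1 : ℂ) ∈ ({1, -1} : Set ℂ) := Or.inr rfl
  have hP := hB k l p 1 h1 (-1) h2 1 h1
  have hQ := (hBF k l α α 1 h1 (-1) h2 (-1) h2).1
  rw [comm_anticomm_leibniz, hP, hQ]
  simp only [ringAnticomm, smul_add, add_mul, mul_add, smul_mul_assoc, mul_smul_comm,
    mul_zero, zero_mul, sub_self, zero_smul, add_zero, smul_zero]
  ring_nf


end
end

section
/- Let A be an associative unital ℂ-algebra containing parabosons B_k^± (k ∈ Fin m) and parafermions F_α^± (α ∈ Fin n) satisfying the relative parabose (Greenberg–Messiah) mixed relations. Then for all k ∈ Fin m and α, β, γ ∈ Fin n one has [[F_α^+, F_β^−], {F_γ^+, B_k^−}] = 2·δ_{βγ}·{F_α^+, B_k^−} in A. -/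
open scoped BigOperators

noncomputable section

lemma comm_anticomm_expand {A : Type*} [Ring A] (x y z : A) :
    ringComm x (ringAnticomm y z) =
      ringAnticomm (ringComm x y) z + ringAnticomm y (ringComm x z) := by
  simp only [ringComm, ringAnticomm]; noncomm_ring

lemma anticomm_smul_left {A : Type*} [Ring A] [Algebra ℂ A] (c : ℂ) (x y : A) :
    ringAnticomm (c • x) y = c • ringAnticomm x y := by
  simp [ringAnticomm, smul_add, smul_mul_assoc, mul_smul_comm]

theorem comm_FF_FB
 {A : Type*} [Ring A] [Algebra ℂ A] {m n : ℕ}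
    (B : Fin m → ℂ → A) (F : Fin n → ℂ → A)
    (hB : IsParabosonFamily B) (hF : IsParafermionFamily F)
    (hBF : RelParaboseMixed B F)
    (k : Fin m) (α β γ : Fin n) :
    ringComm (ringComm (F α 1) (F β (-1))) (ringAnticomm (F γ 1) (B k (-1))) =
      ((2 : ℂ) * (if β = γ then (1 : ℂ) else 0)) • ringAnticomm (F α 1) (B k (-1)) := by
  have h1 : ringComm (ringComm (F α 1) (F β (-1))) (F γ 1) =
      ((2 : ℂ) * (if β = γ then (1 : ℂ) else 0)) • F α 1 := by
    have := hF α β γ 1 (by simp) (-1) (by simp) 1 (by simp)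
    rw [this]
    norm_num
  have h2 : ringComm (ringComm (F α 1) (F β (-1))) (B k (-1)) = 0 :=
    (hBF k k α β 1 (by simp) (-1) (by simp) (-1) (by simp)).2.1
  rw [comm_anticomm_expand, h1, h2, anticomm_smul_left]
  simp [ringAnticomm]


end
end

section
/- Let A be an associative unital ℂ-algebra containing parabosons B_k^± (k ∈ Fin m) and parafermions F_α^± (α ∈ Fin n) satisfying the relative parabose (Greenberg–Messiah) mixed relations. Then for all k, l ∈ Fin m and α, β ∈ Fin n one has {{B_k^+, F_α^−}, {F_β^+, B_l^−}} = 2·δ_{αβ}·{B_k^+, B_l^−} + 2·δ_{kl}·[F_β^+, F_α^−] in A. -/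
open scoped BigOperators

noncomputable section

set_option maxHeartbeats 1000000 in
theorem anticomm_BF_FB
 {A : Type*} [Ring A] [Algebra ℂ A] {m n : ℕ}
    (B : Fin m → ℂ → A) (F : Fin n → ℂ → A)
    (hB : IsParabosonFamily B) (hF : IsParafermionFamily F)
    (hBF : RelParaboseMixed B F)
    (k l : Fin m) (α β : Fin n) :
    ringAnticomm (ringAnticomm (B k 1) (F α (-1))) (ringAnticomm (F β 1) (B l (-1))) =
      ((2 : ℂ) * (if α = β then (1 : ℂ) else 0)) • ringAnticomm (B k 1) (B l (-1)) +
        ((2 : ℂ) * (if k = l then (1 : ℂ) else 0)) • ringComm (F β 1) (F α (-1)) := by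
  have h1s : (1:ℂ) ∈ ({1,-1} : Set ℂ) := by left; rfl
  have hm1 : (-1:ℂ) ∈ ({1,-1} : Set ℂ) := by right; rfl
  obtain ⟨-, -, -, h1⟩ := hBF k l α β 1 h1s (-1) hm1 1 h1s
  obtain ⟨-, -, h2, -⟩ := hBF k l α β 1 h1s (-1) hm1 (-1) hm1
  norm_num at h1 h2
  simp only [ringComm, ringAnticomm] at h1 h2 ⊢
  by_cases hab : α = β <;> by_cases hkl : k = l <;>
    simp only [hab, hkl, if_true, if_false, ite_true, ite_false, eq_self_iff_true, mul_one,
      mul_zero, zero_smul, add_zero, zero_add] at h1 h2 ⊢ <;>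
  linear_combination (norm := (noncomm_ring; try module)) h1 * B l (-1) + B l (-1) * h1 + h2 * F β 1 - F β 1 * h2

end
end

section
/- Let A be an associative unital ℂ-algebra containing parabosons B_k^± (k ∈ Fin m) and parafermions F_α^± (α ∈ Fin n) satisfying the relative parabose (Greenberg–Messiah) mixed relations. Then for all k, l ∈ Fin m and α, β ∈ Fin n one has {{B_k^+, F_α^−}, {B_l^+, F_β^−}} = 0 and {{F_α^+, B_k^−}, {F_β^+, B_l^−}} = 0 in A. -/
open scoped BigOperators

noncomputable section

lemma ringAnticomm_comm {A : Type*} [Ring A] (x y : A) :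
    ringAnticomm x y = ringAnticomm y x := by
  unfold ringAnticomm; exact add_comm _ _

lemma anticomm_key {A : Type*} [Ring A] (X b f : A)
    (hb : X * b - b * X = 0) (hf : X * f + f * X = 0) :
    ringAnticomm X (ringAnticomm b f) = 0 := by
  have hb' : X * b = b * X := sub_eq_zero.mp hb
  have hf' : X * f = -(f * X) := eq_neg_of_add_eq_zero_left hf
  have h1 : X * (b * f) = -(b * f * X) := by
    rw [← mul_assoc, hb', mul_assoc, hf', mul_neg, ← mul_assoc]
  have h2 : X * (f * b) = -(f * b * X) := by
    rw [← mul_assoc, hf', neg_mul, mul_assoc, hb', ← mul_assoc]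
  unfold ringAnticomm
  rw [mul_add, add_mul, h1, h2]
  abel

theorem anticomm_BF_BF_and_FB_FB
 {A : Type*} [Ring A] [Algebra ℂ A] {m n : ℕ}
    (B : Fin m → ℂ → A) (F : Fin n → ℂ → A)
    (hB : IsParabosonFamily B) (hF : IsParafermionFamily F)
    (hBF : RelParaboseMixed B F)
    (k l : Fin m) (α β : Fin n) :
    ringAnticomm (ringAnticomm (B k 1) (F α (-1))) (ringAnticomm (B l 1) (F β (-1))) = 0 ∧
    ringAnticomm (ringAnticomm (F α 1) (B k (-1))) (ringAnticomm (F β 1) (B l (-1))) = 0 := by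
  have h1 : (1 : ℂ) ∈ ({1, -1} : Set ℂ) := Or.inl rfl
  have hm1 : (-1 : ℂ) ∈ ({1, -1} : Set ℂ) := Or.inr rfl
  constructor
  · apply anticomm_key
    · have h := (hBF k l α β 1 h1 (-1) hm1 1 h1).2.2.1
      simpa [ringComm] using h
    · have h := (hBF k l α β 1 h1 (-1) hm1 (-1) hm1).2.2.2
      simpa [ringAnticomm] using h
  · rw [ringAnticomm_comm (F α 1), ringAnticomm_comm (F β 1)]
    apply anticomm_key
    · have h := (hBF k l α β (-1) hm1 1 h1 (-1) hm1).2.2.1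
      simpa [ringComm] using h
    · have h := (hBF k l α β (-1) hm1 1 h1 1 h1).2.2.2
      simpa [ringAnticomm] using h

end
end

section
/- Let A be an associative unital ℂ-algebra containing parabosons B_k^± (k ∈ Fin m) and parafermions F_α^± (α ∈ Fin n) satisfying the relative parabose (Greenberg–Messiah) mixed relations. For M ∈ Matrix (Fin m) (Fin m) ℂ and P ∈ Matrix (Fin n) (Fin n) ℂ define J(M,P) := (1/2)·Σ_{k,l} M_{kl}·{B_k^+, B_l^−} + (1/2)·Σ_{α,β} P_{αβ}·[F_α^+, F_β^−] ∈ A. Then for all M, M' ∈ Matrix (Fin m) (Fin m) ℂ and P, P' ∈ Matrix (Fin n) (Fin n) ℂ one has [J(M,P), J(M',P')] = J(M·M' − M'·M, P·P' − P'·P). -/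
open scoped BigOperators

noncomputable section

/-- The even-part realization map `J(M,P)`. -/
def Jmap {A : Type*} [Ring A] [Algebra ℂ A] {m n : ℕ}
    (B : Fin m → ℂ → A) (F : Fin n → ℂ → A)
    (M : Matrix (Fin m) (Fin m) ℂ) (P : Matrix (Fin n) (Fin n) ℂ) : A :=
  (1 / 2 : ℂ) • ∑ k, ∑ l, M k l • ringAnticomm (B k 1) (B l (-1)) +
    (1 / 2 : ℂ) • ∑ α, ∑ β, P α β • ringComm (F α 1) (F β (-1))

set_option linter.unusedSectionVars false
section Aux
variable {A : Type*} [Ring A] [Algebra ℂ A]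

lemma rc_add_left (x y z : A) : ringComm (x + y) z = ringComm x z + ringComm y z := by
  simp only [ringComm]; noncomm_ring

lemma rc_add_right (x u v : A) : ringComm x (u + v) = ringComm x u + ringComm x v := by
  simp only [ringComm]; noncomm_ring

lemma rc_sub_right (x u v : A) : ringComm x (u - v) = ringComm x u - ringComm x v := by
  simp only [ringComm]; noncomm_ring

lemma rc_mul_right (x u v : A) : ringComm x (u * v) = ringComm x u * v + u * ringComm x v := by
  simp only [ringComm]; noncomm_ring

lemma rc_smul_left (c : ℂ) (x y : A) : ringComm (c • x) y = c • ringComm x y := by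
  simp only [ringComm, smul_mul_assoc, mul_smul_comm, smul_sub]

lemma rc_smul_right (c : ℂ) (x y : A) : ringComm x (c • y) = c • ringComm x y := by
  simp only [ringComm, smul_mul_assoc, mul_smul_comm, smul_sub]

lemma rc_sum_left {ι : Type*} (s : Finset ι) (f : ι → A) (y : A) :
    ringComm (∑ i ∈ s, f i) y = ∑ i ∈ s, ringComm (f i) y := by
  simp only [ringComm, Finset.sum_mul, Finset.mul_sum, Finset.sum_sub_distrib]

lemma rc_sum_right {ι : Type*} (s : Finset ι) (x : A) (f : ι → A) :
    ringComm x (∑ i ∈ s, f i) = ∑ i ∈ s, ringComm x (f i) := by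
  simp only [ringComm, Finset.sum_mul, Finset.mul_sum, Finset.sum_sub_distrib]

lemma mem_one : (1 : ℂ) ∈ ({1, -1} : Set ℂ) := by norm_num
lemma mem_negone : (-1 : ℂ) ∈ ({1, -1} : Set ℂ) := by norm_num

lemma comm_XX {ι : Type*} [DecidableEq ι] {B : ι → ℂ → A} (hB : IsParabosonFamily B)
    (i j k l : ι) :
    ringComm (ringAnticomm (B i 1) (B j (-1))) (ringAnticomm (B k 1) (B l (-1))) =
      (2 * (if j = k then (1 : ℂ) else 0)) • ringAnticomm (B i 1) (B l (-1)) -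
      (2 * (if i = l then (1 : ℂ) else 0)) • ringAnticomm (B k 1) (B j (-1)) := by
  have hp : ringComm (ringAnticomm (B i 1) (B j (-1))) (B k 1)
      = (2 * (if j = k then (1 : ℂ) else 0)) • B i 1 := by
    have h := hB i j k 1 mem_one (-1) mem_negone 1 mem_one
    rw [h]; norm_num
  have hm : ringComm (ringAnticomm (B i 1) (B j (-1))) (B l (-1))
      = ((-2) * (if i = l then (1 : ℂ) else 0)) • B j (-1) := by
    have h := hB i j l 1 mem_one (-1) mem_negone (-1) mem_negone
    rw [h]; norm_num
  rw [show ringAnticomm (B k 1) (B l (-1)) = B k 1 * B l (-1) + B l (-1) * B k 1 from rfl,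
    rc_add_right, rc_mul_right, rc_mul_right, hp, hm]
  simp only [ringAnticomm, smul_add, smul_mul_assoc, mul_smul_comm, neg_smul]
  module

lemma comm_YY {κ : Type*} [DecidableEq κ] {F : κ → ℂ → A} (hF : IsParafermionFamily F)
    (α β γ δ : κ) :
    ringComm (ringComm (F α 1) (F β (-1))) (ringComm (F γ 1) (F δ (-1))) =
      (2 * (if β = γ then (1 : ℂ) else 0)) • ringComm (F α 1) (F δ (-1)) -
      (2 * (if α = δ then (1 : ℂ) else 0)) • ringComm (F γ 1) (F β (-1)) := by
  have hp : ringComm (ringComm (F α 1) (F β (-1))) (F γ 1)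
      = (2 * (if β = γ then (1 : ℂ) else 0)) • F α 1 := by
    have h := hF α β γ 1 mem_one (-1) mem_negone 1 mem_one
    rw [h]; norm_num
  have hm : ringComm (ringComm (F α 1) (F β (-1))) (F δ (-1))
      = ((-2) * (if α = δ then (1 : ℂ) else 0)) • F β (-1) := by
    have h := hF α β δ 1 mem_one (-1) mem_negone (-1) mem_negone
    rw [h]; norm_num [apply_ite (fun x : A => -x)]
  rw [show ringComm (F γ 1) (F δ (-1)) = F γ 1 * F δ (-1) - F δ (-1) * F γ 1 from rfl,
    rc_sub_right, rc_mul_right, rc_mul_right, hp, hm]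
  simp only [ringComm, smul_sub, smul_mul_assoc, mul_smul_comm, neg_smul]
  module

lemma comm_XY0 {ι κ : Type*} [DecidableEq ι] [DecidableEq κ] {B : ι → ℂ → A} {F : κ → ℂ → A}
    (hBF : RelParaboseMixed B F) (i j : ι) (γ δ : κ) :
    ringComm (ringAnticomm (B i 1) (B j (-1))) (ringComm (F γ 1) (F δ (-1))) = 0 := by
  have h1 := (hBF i j γ γ 1 mem_one (-1) mem_negone 1 mem_one).1
  have h2 := (hBF i j δ δ 1 mem_one (-1) mem_negone (-1) mem_negone).1
  rw [show ringComm (F γ 1) (F δ (-1)) = F γ 1 * F δ (-1) - F δ (-1) * F γ 1 from rfl,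
    rc_sub_right, rc_mul_right, rc_mul_right, h1, h2]
  simp

lemma comm_YX0 {ι κ : Type*} [DecidableEq ι] [DecidableEq κ] {B : ι → ℂ → A} {F : κ → ℂ → A}
    (hBF : RelParaboseMixed B F) (α β : κ) (k l : ι) :
    ringComm (ringComm (F α 1) (F β (-1))) (ringAnticomm (B k 1) (B l (-1))) = 0 := by
  have h1 := (hBF k k α β 1 mem_one (-1) mem_negone 1 mem_one).2.1
  have h2 := (hBF l l α β 1 mem_one (-1) mem_negone (-1) mem_negone).2.1
  rw [show ringAnticomm (B k 1) (B l (-1)) = B k 1 * B l (-1) + B l (-1) * B k 1 from rfl,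
    rc_add_right, rc_mul_right, rc_mul_right, h1, h2]
  simp


lemma rc_bigsum {d e : Type*} [Fintype d] [Fintype e] (c : d → d → ℂ) (c' : e → e → ℂ)
    (X : d → d → A) (Y : e → e → A) :
    ringComm (∑ i, ∑ j, c i j • X i j) (∑ k, ∑ l, c' k l • Y k l)
      = ∑ i, ∑ j, ∑ k, ∑ l, (c i j * c' k l) • ringComm (X i j) (Y k l) := by
  rw [rc_sum_left]
  refine Finset.sum_congr rfl fun i _ => ?_
  rw [rc_sum_left]
  refine Finset.sum_congr rfl fun j _ => ?_
  simp only [rc_smul_left, rc_sum_right, rc_smul_right, Finset.smul_sum, smul_smul]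
  exact Finset.sum_congr rfl fun k _ => Finset.sum_congr rfl fun l _ => by
    rw [mul_comm]

lemma collapse {d : Type*} [Fintype d] [DecidableEq d]
    (M M' : Matrix d d ℂ) (X : d → d → A) :
    (∑ i, ∑ j, ∑ k, ∑ l, (M i j * M' k l) •
        ((2 * (if j = k then (1 : ℂ) else 0)) • X i l -
         (2 * (if i = l then (1 : ℂ) else 0)) • X k j)) =
      (2 : ℂ) • ∑ i, ∑ l, ((M * M' - M' * M) i l) • X i l := by
  have step : ∀ i j : d, (∑ k, ∑ l, (M i j * M' k l) •
        ((2 * (if j = k then (1 : ℂ) else 0)) • X i l -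
         (2 * (if i = l then (1 : ℂ) else 0)) • X k j))
      = (∑ l, (2 * (M i j * M' j l)) • X i l) - ∑ k, (2 * (M i j * M' k i)) • X k j := by
    intro i j
    simp only [smul_sub, smul_smul, Finset.sum_sub_distrib]
    congr 1
    · calc (∑ k, ∑ l, (M i j * M' k l * (2 * (if j = k then (1:ℂ) else 0))) • X i l)
          = ∑ l, (M i j * M' j l * (2 * (if j = j then (1:ℂ) else 0))) • X i l := by
            refine Finset.sum_eq_single_of_mem j (Finset.mem_univ j) ?_
            intro k _ hk
            refine Finset.sum_eq_zero fun l _ => ?_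
            simp [Ne.symm hk]
        _ = ∑ l, (2 * (M i j * M' j l)) • X i l := by
            refine Finset.sum_congr rfl fun l _ => ?_
            rw [if_pos rfl]; ring_nf
    · refine Finset.sum_congr rfl fun k _ => ?_
      calc (∑ l, (M i j * M' k l * (2 * (if i = l then (1:ℂ) else 0))) • X k j)
          = (M i j * M' k i * (2 * (if i = i then (1:ℂ) else 0))) • X k j := by
            refine Finset.sum_eq_single_of_mem i (Finset.mem_univ i) ?_
            intro l _ hl
            simp [Ne.symm hl]
        _ = (2 * (M i j * M' k i)) • X k j := by rw [if_pos rfl]; ring_nf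
  calc (∑ i, ∑ j, ∑ k, ∑ l, (M i j * M' k l) •
        ((2 * (if j = k then (1 : ℂ) else 0)) • X i l -
         (2 * (if i = l then (1 : ℂ) else 0)) • X k j))
      = ∑ i, ∑ j, ((∑ l, (2 * (M i j * M' j l)) • X i l) -
          ∑ k, (2 * (M i j * M' k i)) • X k j) :=
        Finset.sum_congr rfl fun i _ => Finset.sum_congr rfl fun j _ => step i j
    _ = (∑ i, ∑ j, ∑ l, (2 * (M i j * M' j l)) • X i l) -
          ∑ i, ∑ j, ∑ k, (2 * (M i j * M' k i)) • X k j := by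
        simp only [Finset.sum_sub_distrib]
    _ = (∑ i, ∑ l, (2 * ((M * M') i l)) • X i l) -
          ∑ k, ∑ j, (2 * ((M' * M) k j)) • X k j := by
        congr 1
        · refine Finset.sum_congr rfl fun i _ => ?_
          rw [Finset.sum_comm]
          refine Finset.sum_congr rfl fun l _ => ?_
          rw [← Finset.sum_smul]
          congr 1
          rw [Matrix.mul_apply, Finset.mul_sum]
        · calc (∑ i, ∑ j, ∑ k, (2 * (M i j * M' k i)) • X k j)
              = ∑ i, ∑ k, ∑ j, (2 * (M i j * M' k i)) • X k j :=
                Finset.sum_congr rfl fun i _ => Finset.sum_comm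
            _ = ∑ k, ∑ i, ∑ j, (2 * (M i j * M' k i)) • X k j := Finset.sum_comm
            _ = ∑ k, ∑ j, ∑ i, (2 * (M i j * M' k i)) • X k j :=
                Finset.sum_congr rfl fun k _ => Finset.sum_comm
            _ = ∑ k, ∑ j, (2 * ((M' * M) k j)) • X k j := by
                refine Finset.sum_congr rfl fun k _ => Finset.sum_congr rfl fun j _ => ?_
                rw [← Finset.sum_smul]
                congr 1
                rw [Matrix.mul_apply, Finset.mul_sum]
                exact Finset.sum_congr rfl fun x _ => by ring
    _ = (2 : ℂ) • ∑ i, ∑ l, ((M * M' - M' * M) i l) • X i l := by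
        simp only [Matrix.sub_apply, sub_smul, Finset.sum_sub_distrib, mul_smul,
          ← Finset.smul_sum, smul_sub]

end Aux

theorem comm_Jmap_Jmap
 {A : Type*} [Ring A] [Algebra ℂ A] {m n : ℕ}
    (B : Fin m → ℂ → A) (F : Fin n → ℂ → A)
    (hB : IsParabosonFamily B) (hF : IsParafermionFamily F)
    (hBF : RelParaboseMixed B F)
    (M M' : Matrix (Fin m) (Fin m) ℂ) (P P' : Matrix (Fin n) (Fin n) ℂ) :
    ringComm (Jmap B F M P) (Jmap B F M' P') =
      Jmap B F (M * M' - M' * M) (P * P' - P' * P) := by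
  have hBB : ringComm (∑ k, ∑ l, M k l • ringAnticomm (B k 1) (B l (-1)))
      (∑ k, ∑ l, M' k l • ringAnticomm (B k 1) (B l (-1)))
      = (2 : ℂ) • ∑ k, ∑ l, ((M * M' - M' * M) k l) • ringAnticomm (B k 1) (B l (-1)) := by
    calc ringComm (∑ k, ∑ l, M k l • ringAnticomm (B k 1) (B l (-1)))
          (∑ k, ∑ l, M' k l • ringAnticomm (B k 1) (B l (-1)))
        = ∑ i, ∑ j, ∑ k, ∑ l, (M i j * M' k l) •
            ringComm (ringAnticomm (B i 1) (B j (-1))) (ringAnticomm (B k 1) (B l (-1))) :=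
          rc_bigsum _ _ _ _
      _ = ∑ i, ∑ j, ∑ k, ∑ l, (M i j * M' k l) •
            ((2 * (if j = k then (1 : ℂ) else 0)) • ringAnticomm (B i 1) (B l (-1)) -
             (2 * (if i = l then (1 : ℂ) else 0)) • ringAnticomm (B k 1) (B j (-1))) := by
          simp only [comm_XX hB]
      _ = (2 : ℂ) • ∑ k, ∑ l, ((M * M' - M' * M) k l) • ringAnticomm (B k 1) (B l (-1)) :=
          collapse M M' _
  have hFF : ringComm (∑ α, ∑ β, P α β • ringComm (F α 1) (F β (-1)))
      (∑ α, ∑ β, P' α β • ringComm (F α 1) (F β (-1)))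
      = (2 : ℂ) • ∑ α, ∑ β, ((P * P' - P' * P) α β) • ringComm (F α 1) (F β (-1)) := by
    calc ringComm (∑ α, ∑ β, P α β • ringComm (F α 1) (F β (-1)))
          (∑ α, ∑ β, P' α β • ringComm (F α 1) (F β (-1)))
        = ∑ α, ∑ β, ∑ γ, ∑ δ, (P α β * P' γ δ) •
            ringComm (ringComm (F α 1) (F β (-1))) (ringComm (F γ 1) (F δ (-1))) :=
          rc_bigsum _ _ _ _
      _ = ∑ α, ∑ β, ∑ γ, ∑ δ, (P α β * P' γ δ) •
            ((2 * (if β = γ then (1 : ℂ) else 0)) • ringComm (F α 1) (F δ (-1)) -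
             (2 * (if α = δ then (1 : ℂ) else 0)) • ringComm (F γ 1) (F β (-1))) := by
          simp only [comm_YY hF]
      _ = (2 : ℂ) • ∑ α, ∑ β, ((P * P' - P' * P) α β) • ringComm (F α 1) (F β (-1)) :=
          collapse P P' _
  have hXY : ringComm (∑ k, ∑ l, M k l • ringAnticomm (B k 1) (B l (-1)))
      (∑ α, ∑ β, P' α β • ringComm (F α 1) (F β (-1))) = 0 := by
    simp only [rc_sum_left, rc_sum_right, rc_smul_left, rc_smul_right,
      comm_XY0 hBF, smul_zero, Finset.sum_const_zero]
  have hYX : ringComm (∑ α, ∑ β, P α β • ringComm (F α 1) (F β (-1)))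
      (∑ k, ∑ l, M' k l • ringAnticomm (B k 1) (B l (-1))) = 0 := by
    simp only [rc_sum_left, rc_sum_right, rc_smul_left, rc_smul_right,
      comm_YX0 hBF, smul_zero, Finset.sum_const_zero]
  simp only [Jmap, rc_add_left, rc_add_right, rc_smul_left, rc_smul_right]
  rw [hBB, hFF, hXY, hYX]
  simp only [smul_zero, add_zero, zero_add, smul_smul]
  module


end
end

section
/- (Paraboson realization of an arbitrary Lie algebra.) Let L be a Lie algebra over ℂ (of finite or infinite dimension), let ρ : L → Matrix (Fin m) (Fin m) ℂ be a Lie algebra homomorphism into the matrix algebra with the commutator bracket, and let A be an associative unital ℂ-algebra containing a family of parabosons B_k^± (k ∈ Fin m). Then the ℂ-linear map J : L → A defined by J(X) := (1/2)·Σ_{k,l} ρ(X)_{kl}·{B_k^+, B_l^−} satisfies J(⁅X, Y⁆) = J(X)·J(Y) − J(Y)·J(X) for all X, Y ∈ L; consequently J extends uniquely to a ℂ-algebra homomorphism from the universal enveloping algebra U(L) to A. -/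
open scoped BigOperators

noncomputable section

attribute [local instance 100] LieRing.ofAssociativeRing

/-!
The bilinears `E k l = ½ {B_k^+, B_l^-}` satisfy `[E k l, B_p^+] = δ_lp B_k^+` and
`[E k l, B_q^-] = -δ_kq B_l^-` by the paraboson relations, hence, by the Leibniz rule,
`[E k l, E p q] = δ_lp E k q - δ_kq E p l`: they commute like the matrix units of `gl(m)`.
So `M ↦ ∑ M k l • E k l` is a Lie algebra homomorphism `gl(m) → A`, and `J` is its composite
with `ρ`; the universal property of `U(L)` does the rest.
-/

section MatrixUnits

variable {R A ι : Type*} [CommRing R] [Ring A] [Algebra R A] [Fintype ι] [DecidableEq ι]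

-- `lie_smul` itself does not fire in `simp` for the commutator bracket of `A`.
theorem lie_smul_of_associative (r : R) (a b : A) : ⁅a, r • b⁆ = r • ⁅a, b⁆ := lie_smul r a b

theorem lie_sum_smul_matrixUnits {e : ι → ι → A}
    (he : ∀ i j k l, ⁅e i j, e k l⁆ = (if j = k then e i l else 0) - if i = l then e k j else 0)
    (M N : Matrix ι ι R) :
    ⁅∑ i, ∑ j, M i j • e i j, ∑ k, ∑ l, N k l • e k l⁆ = ∑ i, ∑ j, (M * N - N * M) i j • e i j := by
  simp only [sum_lie, lie_sum, smul_lie, lie_smul_of_associative, he, smul_sub,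
    Finset.sum_sub_distrib, smul_ite, smul_zero, Finset.sum_ite_irrel, Finset.sum_const_zero,
    Finset.sum_ite_eq', Finset.mem_univ, if_true,
    Finset.smul_sum, smul_smul, Matrix.sub_apply, Matrix.mul_apply, sub_smul, Finset.sum_smul]
  congr 1
  · calc _ = ∑ k, ∑ i, ∑ j, (N k j * M i k) • e i j :=
          Finset.sum_congr rfl fun _ _ => Finset.sum_comm
      _ = ∑ i, ∑ k, ∑ j, (N k j * M i k) • e i j := Finset.sum_comm
      _ = _ := Finset.sum_congr rfl fun i _ => by
          rw [Finset.sum_comm]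
          simp only [mul_comm]
  · exact Finset.sum_congr rfl fun i _ => Finset.sum_comm

@[simps]
def matrixUnitsLieHom (e : ι → ι → A)
    (he : ∀ i j k l, ⁅e i j, e k l⁆ = (if j = k then e i l else 0) - if i = l then e k j else 0) :
    Matrix ι ι R →ₗ⁅R⁆ A where
  toFun M := ∑ i, ∑ j, M i j • e i j
  map_add' M N := by simp only [Matrix.add_apply, add_smul, Finset.sum_add_distrib]
  map_smul' c M := by
    simp only [Matrix.smul_apply, smul_eq_mul, mul_smul, Finset.smul_sum, RingHom.id_apply]
  map_lie' {M N} := by rw [Ring.lie_def M N, lie_sum_smul_matrixUnits he]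

end MatrixUnits

theorem lie_mul_of_associative {A : Type*} [Ring A] (x a b : A) :
    ⁅x, a * b⁆ = ⁅x, a⁆ * b + a * ⁅x, b⁆ := by
  simp only [Ring.lie_def]
  noncomm_ring

theorem UniversalEnvelopingAlgebra.existsUnique_algHom_ι_eq {R L A : Type*} [CommRing R]
    [LieRing L] [LieAlgebra R L] [Ring A] [Algebra R A] (f : L →ₗ⁅R⁆ A) :
    ∃! φ : UniversalEnvelopingAlgebra R L →ₐ[R] A, ∀ X, φ (ι R X) = f X :=
  ⟨lift R f, lift_ι_apply R f, fun φ hφ => (lift_unique R f φ).1 (funext hφ)⟩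

section Paraboson

variable {A ι : Type*} [Ring A] [Algebra ℂ A] [DecidableEq ι] {B : ι → ℂ → A}

def parabosonBilinear (B : ι → ℂ → A) (k l : ι) : A :=
  (1 / 2 : ℂ) • ringAnticomm (B k 1) (B l (-1))

namespace IsParabosonFamily

theorem lie_parabosonBilinear_creation (hB : IsParabosonFamily B) (k l p : ι) :
    ⁅parabosonBilinear B k l, B p 1⁆ = if l = p then B k 1 else 0 := by
  have h := hB k l p 1 (by simp) (-1) (by simp) 1 (by simp)
  rw [parabosonBilinear, smul_lie]
  change (1 / 2 : ℂ) • ringComm _ _ = _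
  rw [h]
  split_ifs <;> norm_num [smul_smul]

theorem lie_parabosonBilinear_annihilation (hB : IsParabosonFamily B) (k l q : ι) :
    ⁅parabosonBilinear B k l, B q (-1)⁆ = -if k = q then B l (-1) else 0 := by
  have h := hB k l q 1 (by simp) (-1) (by simp) (-1) (by simp)
  rw [parabosonBilinear, smul_lie]
  change (1 / 2 : ℂ) • ringComm _ _ = _
  rw [h]
  split_ifs <;> norm_num [smul_smul]

theorem lie_parabosonBilinear (hB : IsParabosonFamily B) (k l p q : ι) :
    ⁅parabosonBilinear B k l, parabosonBilinear B p q⁆ =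
      (if l = p then parabosonBilinear B k q else 0) -
        if k = q then parabosonBilinear B p l else 0 := by
  conv_lhs => rw [parabosonBilinear.eq_1 B p q, lie_smul_of_associative, ringAnticomm, lie_add,
    lie_mul_of_associative, lie_mul_of_associative, hB.lie_parabosonBilinear_creation,
    hB.lie_parabosonBilinear_annihilation]
  split_ifs <;>
    simp only [parabosonBilinear, ringAnticomm, mul_zero, zero_mul, neg_zero, add_zero, zero_add,
      mul_neg, neg_mul] <;>
    module

end IsParabosonFamily

end Paraboson

theorem paraboson_realization_of_Lie_algebra
    {A : Type*} [Ring A] [Algebra ℂ A] {m : ℕ}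
    {L : Type*} [LieRing L] [LieAlgebra ℂ L]
    (ρ : L →ₗ⁅ℂ⁆ Matrix (Fin m) (Fin m) ℂ)
    (B : Fin m → ℂ → A) (hB : IsParabosonFamily B)
    (J : L →ₗ[ℂ] A)
    (hJ : ∀ X : L, J X = (1 / 2 : ℂ) • ∑ k, ∑ l, ρ X k l • ringAnticomm (B k 1) (B l (-1))) :
    (∀ X Y : L, J ⁅X, Y⁆ = J X * J Y - J Y * J X) ∧
    ∃! φ : UniversalEnvelopingAlgebra ℂ L →ₐ[ℂ] A,
      ∀ X : L, φ (UniversalEnvelopingAlgebra.ι ℂ X) = J X := by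
  set f := (matrixUnitsLieHom (parabosonBilinear B) hB.lie_parabosonBilinear).comp ρ
  have hJf : ∀ X, J X = f X := fun X => by
    simp only [hJ, f, LieHom.comp_apply, matrixUnitsLieHom_apply, parabosonBilinear,
      Finset.smul_sum, smul_comm (1 / 2 : ℂ)]
  refine ⟨fun X Y => ?_, ?_⟩
  · simp only [hJf, LieHom.map_lie, Ring.lie_def]
  · simpa only [hJf] using UniversalEnvelopingAlgebra.existsUnique_algHom_ι_eq f

end
end

section
/- (Mixed paraparticle realization of an arbitrary Lie algebra.) Let L be a Lie algebra over ℂ (of finite or infinite dimension), let ρ : L → Matrix (Fin m) (Fin m) ℂ and σ : L → Matrix (Fin n) (Fin n) ℂ be Lie algebra homomorphisms into the respective matrix algebras with the commutator bracket, and let A be an associative unital ℂ-algebra containing parabosons B_k^± (k ∈ Fin m) and parafermions F_α^± (α ∈ Fin n) satisfying the relative parabose (Greenberg–Messiah) mixed relations. Then the ℂ-linear map J : L → A defined by J(X) := (1/2)·Σ_{k,l} ρ(X)_{kl}·{B_k^+, B_l^−} + (1/2)·Σ_{α,β} σ(X)_{αβ}·[F_α^+, F_β^−] satisfies J(⁅X,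 Y⁆) = J(X)·J(Y) − J(Y)·J(X) for all X, Y ∈ L; consequently J extends uniquely to a ℂ-algebra homomorphism from the universal enveloping algebra U(L) to A. -/
open scoped BigOperators

attribute [local instance 100] LieRing.ofAssociativeRing

noncomputable section

/-! The rescaled bilinears `½ {B_k^+, B_l^-}` and `½ [F_α^+, F_β^-]` satisfy the commutation
relations `⁅E_ij, E_kl⁆ = δ_jk E_il - δ_il E_kj` of the matrix units of `gl_m` and `gl_n`, so
`P ↦ ∑ P_ij E_ij` are Lie algebra homomorphisms out of the matrix algebras. The first mixed
relation makes the bosonic and fermionic images commute, hence `J` is the sum of two commuting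
Lie homomorphisms `L → A` (through `ρ` and `σ`), and the universal property of `U(L)` gives the
unique extension. -/

def LieHom.addOfCommute {R L M : Type*} [CommRing R] [LieRing L] [LieAlgebra R L]
    [LieRing M] [LieAlgebra R M] (f g : L →ₗ⁅R⁆ M) (h : ∀ x y, ⁅f x, g y⁆ = 0) :
    L →ₗ⁅R⁆ M :=
  { (f : L →ₗ[R] M) + g with
    map_lie' := fun {x y} => by
      simp only [AddHom.toFun_eq_coe, LinearMap.coe_toAddHom, LinearMap.add_apply,
        LieHom.coe_toLinearMap, LieHom.map_lie, lie_add, add_lie, h, ← lie_skew (g x), neg_zero,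
        add_zero, zero_add] }

def IsMatrixUnitFamily {M ι : Type*} [LieRing M] [DecidableEq ι] (e : ι → ι → M) : Prop :=
  ∀ i j k l, ⁅e i j, e k l⁆ = (if j = k then e i l else 0) - (if i = l then e k j else 0)

section MatrixUnits

variable {R : Type*} [CommRing R] {M : Type*} [LieRing M] [LieAlgebra R M]
  {ι : Type*} [Fintype ι] [DecidableEq ι]

lemma sum_mul_smul_ite_eq_mul (P Q : Matrix ι ι R) (e : ι → ι → M) :
    ∑ i, ∑ j, ∑ k, ∑ l, (P i j * Q k l) • (if j = k then e i l else 0) =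
      ∑ i, ∑ l, (P * Q) i l • e i l := by
  simp only [smul_ite, smul_zero, Finset.sum_ite_irrel, Finset.sum_const_zero,
    Finset.sum_ite_eq, Finset.mem_univ, if_true, Matrix.mul_apply, Finset.sum_smul]
  exact Finset.sum_congr rfl fun i _ => Finset.sum_comm

lemma sum_mul_smul_ite_eq_mul_rev (P Q : Matrix ι ι R) (e : ι → ι → M) :
    ∑ i, ∑ j, ∑ k, ∑ l, (P i j * Q k l) • (if i = l then e k j else 0) =
      ∑ k, ∑ j, (Q * P) k j • e k j := by
  simp only [smul_ite, smul_zero, Finset.sum_ite_eq, Finset.mem_univ, if_true]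
  rw [Finset.sum_comm_cycle]
  simp only [Matrix.mul_apply, Finset.sum_smul, mul_comm (P _ _)]
  exact Finset.sum_congr rfl fun k _ => Finset.sum_comm

namespace IsMatrixUnitFamily

variable (R) in
def toLieHom {e : ι → ι → M} (he : IsMatrixUnitFamily e) : Matrix ι ι R →ₗ⁅R⁆ M where
  toFun P := ∑ i, ∑ j, P i j • e i j
  map_add' P Q := by simp only [Matrix.add_apply, add_smul, Finset.sum_add_distrib]
  map_smul' c P := by
    simp only [Matrix.smul_apply, smul_eq_mul, mul_smul, Finset.smul_sum, RingHom.id_apply]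
  map_lie' {P Q} := by
    symm
    calc ⁅∑ i, ∑ j, P i j • e i j, ∑ k, ∑ l, Q k l • e k l⁆
        = ∑ i, ∑ j, ∑ k, ∑ l, (P i j * Q k l) • ⁅e i j, e k l⁆ := by
          simp only [sum_lie, smul_lie]
          simp only [lie_sum, lie_smul, Finset.smul_sum, smul_smul]
      _ = ∑ i, ∑ j, ((P * Q) i j - (Q * P) i j) • e i j := by
          simp only [he _ _ _ _, smul_sub, Finset.sum_sub_distrib, sum_mul_smul_ite_eq_mul,
            sum_mul_smul_ite_eq_mul_rev, sub_smul]

lemma toLieHom_apply {e : ι → ι → M} (he : IsMatrixUnitFamily e) (P : Matrix ι ι R) :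
    he.toLieHom R P = ∑ i, ∑ j, P i j • e i j :=
  rfl

lemma lie_toLieHom_toLieHom_eq_zero {κ : Type*} [Fintype κ] [DecidableEq κ]
    {e : ι → ι → M} {e' : κ → κ → M}
    (he : IsMatrixUnitFamily e) (he' : IsMatrixUnitFamily e')
    (h : ∀ i j k l, ⁅e i j, e' k l⁆ = 0) (P : Matrix ι ι R) (Q : Matrix κ κ R) :
    ⁅he.toLieHom R P, he'.toLieHom R Q⁆ = 0 := by
  simp only [toLieHom_apply, sum_lie, lie_sum, smul_lie, lie_smul, h, smul_zero,
    Finset.sum_const_zero]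

end IsMatrixUnitFamily

end MatrixUnits

lemma lie_ringAnticomm {A : Type*} [Ring A] (x y z : A) :
    ⁅x, ringAnticomm y z⁆ = ringAnticomm ⁅x, y⁆ z + ringAnticomm y ⁅x, z⁆ := by
  simp only [ringAnticomm, Ring.lie_def]
  noncomm_ring

lemma lie_ringComm {A : Type*} [Ring A] (x y z : A) :
    ⁅x, ringComm y z⁆ = ringComm ⁅x, y⁆ z + ringComm y ⁅x, z⁆ := by
  simp only [ringComm, Ring.lie_def]
  noncomm_ring

section Paraparticles

variable {A : Type*} [Ring A] [Algebra ℂ A] {ι κ : Type*} [DecidableEq ι] [DecidableEq κ]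

namespace IsParabosonFamily

variable {B : ι → ℂ → A} (hB : IsParabosonFamily B)
include hB

lemma lie_anticomm_plus (k l p : ι) :
    ⁅ringAnticomm (B k 1) (B l (-1)), B p 1⁆ = (2 : ℂ) • if l = p then B k 1 else 0 := by
  change ringComm _ _ = _
  rw [hB k l p 1 (by simp) (-1) (by simp) 1 (by simp)]
  split_ifs <;> norm_num

lemma lie_anticomm_minus (k l q : ι) :
    ⁅ringAnticomm (B k 1) (B l (-1)), B q (-1)⁆ =
      -(2 : ℂ) • if k = q then B l (-1) else 0 := by
  change ringComm _ _ = _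
  rw [hB k l q 1 (by simp) (-1) (by simp) (-1) (by simp)]
  split_ifs <;> norm_num

lemma isMatrixUnitFamily :
    IsMatrixUnitFamily fun k l => (1 / 2 : ℂ) • ringAnticomm (B k 1) (B l (-1)) := by
  intro k l p q
  rw [smul_lie, lie_smul, lie_ringAnticomm, hB.lie_anticomm_plus, hB.lie_anticomm_minus]
  split_ifs <;>
    simp only [ringAnticomm, smul_mul_assoc, mul_smul_comm, smul_zero, zero_mul, mul_zero] <;>
    module

end IsParabosonFamily

namespace IsParafermionFamily

variable {F : κ → ℂ → A} (hF : IsParafermionFamily F)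
include hF

lemma lie_comm_plus (a b c : κ) :
    ⁅ringComm (F a 1) (F b (-1)), F c 1⁆ = (2 : ℂ) • if b = c then F a 1 else 0 := by
  change ringComm _ _ = _
  rw [hF a b c 1 (by simp) (-1) (by simp) 1 (by simp)]
  split_ifs <;> norm_num

lemma lie_comm_minus (a b d : κ) :
    ⁅ringComm (F a 1) (F b (-1)), F d (-1)⁆ =
      -(2 : ℂ) • if a = d then F b (-1) else 0 := by
  change ringComm _ _ = _
  rw [hF a b d 1 (by simp) (-1) (by simp) (-1) (by simp)]
  split_ifs <;> norm_num

lemma isMatrixUnitFamily :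
    IsMatrixUnitFamily fun a b => (1 / 2 : ℂ) • ringComm (F a 1) (F b (-1)) := by
  intro a b c d
  rw [smul_lie, lie_smul, lie_ringComm, hF.lie_comm_plus, hF.lie_comm_minus]
  split_ifs <;>
    simp only [ringComm, smul_mul_assoc, mul_smul_comm, smul_zero, zero_mul, mul_zero] <;>
    module

end IsParafermionFamily

lemma RelParaboseMixed.lie_anticomm_comm_eq_zero {B : ι → ℂ → A} {F : κ → ℂ → A}
    (hBF : RelParaboseMixed B F) (k l : ι) (a b : κ) :
    ⁅ringAnticomm (B k 1) (B l (-1)), ringComm (F a 1) (F b (-1))⁆ = 0 := by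
  have hplus : ⁅ringAnticomm (B k 1) (B l (-1)), F a 1⁆ = 0 :=
    (hBF k l a a 1 (by simp) (-1) (by simp) 1 (by simp)).1
  have hminus : ⁅ringAnticomm (B k 1) (B l (-1)), F b (-1)⁆ = 0 :=
    (hBF k l b b 1 (by simp) (-1) (by simp) (-1) (by simp)).1
  rw [lie_ringComm, hplus, hminus]
  simp only [ringComm, zero_mul, mul_zero, sub_self, add_zero]

end Paraparticles

theorem mixed_paraparticle_realization_of_Lie_algebra
    {A : Type*} [Ring A] [Algebra ℂ A] {m n : ℕ}
    {L : Type*} [LieRing L] [LieAlgebra ℂ L]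
    (ρ : L →ₗ⁅ℂ⁆ Matrix (Fin m) (Fin m) ℂ) (σ : L →ₗ⁅ℂ⁆ Matrix (Fin n) (Fin n) ℂ)
    (B : Fin m → ℂ → A) (F : Fin n → ℂ → A)
    (hB : IsParabosonFamily B) (hF : IsParafermionFamily F)
    (hBF : RelParaboseMixed B F)
    (J : L →ₗ[ℂ] A)
    (hJ : ∀ X : L, J X =
      (1 / 2 : ℂ) • ∑ k, ∑ l, ρ X k l • ringAnticomm (B k 1) (B l (-1)) +
        (1 / 2 : ℂ) • ∑ α, ∑ β, σ X α β • ringComm (F α 1) (F β (-1))) :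
    (∀ X Y : L, J ⁅X, Y⁆ = J X * J Y - J Y * J X) ∧
    ∃! φ : UniversalEnvelopingAlgebra ℂ L →ₐ[ℂ] A,
      ∀ X : L, φ (UniversalEnvelopingAlgebra.ι ℂ X) = J X := by
  let J' : L →ₗ⁅ℂ⁆ A := ((hB.isMatrixUnitFamily.toLieHom ℂ).comp ρ).addOfCommute
    ((hF.isMatrixUnitFamily.toLieHom ℂ).comp σ) fun X Y =>
      IsMatrixUnitFamily.lie_toLieHom_toLieHom_eq_zero
        hB.isMatrixUnitFamily hF.isMatrixUnitFamily
        (fun k l a b => by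
          rw [smul_lie, lie_smul, hBF.lie_anticomm_comm_eq_zero, smul_zero, smul_zero]) _ _
  have hJJ' : ∀ X, J X = J' X := fun X => by
    rw [hJ]
    simp only [J', LieHom.addOfCommute, Finset.smul_sum, smul_comm (1 / 2 : ℂ)]
    rfl
  refine ⟨fun X Y => by rw [hJJ', hJJ', hJJ', LieHom.map_lie, Ring.lie_def], ?_⟩
  refine ⟨UniversalEnvelopingAlgebra.lift ℂ J', fun X => ?_, fun φ hφ => ?_⟩
  · rw [UniversalEnvelopingAlgebra.lift_ι_apply, hJJ']
  · rw [← UniversalEnvelopingAlgebra.lift_unique]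
    funext X
    exact (hφ X).trans (hJJ' X)

end
end
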